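/- arXiv:0805.2416 — 5 statements merged into one kernel-verified Lean document; each statement's English description precedes it below -/
import Mathlib

section
/- For every permutation σ of {1,...,n}, the sum of the elements of Exd(σ) equals maj(σ) − exc(σ), where Exd(σ) is the descent set of the word obtained from the one-line notation of σ by barring each letter in an excedance position, with barred letters ordered below all unbarred letters (1̄ < ... < n̄ < 1 < ... < n). -/
open scoped Classical

/-- The descent set of `σ ∈ S_n`, as a set of 0-based positions `i`
(`i ∈ DesSet` means there is a descent between positions `i` and `i+1`,
i.e. the 1-based descent position is `i+1`). -/
noncomputable def DesSet (n : ℕ) (σ : Equiv.Perm (Fin n)) : Finset ℕ :=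
  (Finset.range n).filter fun i =>
    ∃ (h1 : i < n) (h2 : i + 1 < n), σ ⟨i + 1, h2⟩ < σ ⟨i, h1⟩

/-- The major index `maj σ = Σ_{i ∈ Des σ} i` (1-based positions). -/
noncomputable def maj (n : ℕ) (σ : Equiv.Perm (Fin n)) : ℕ :=
  ∑ i ∈ DesSet n σ, (i + 1)

/-- The set of (0-based) excedance positions of `σ`. -/
noncomputable def ExcSet (n : ℕ) (σ : Equiv.Perm (Fin n)) : Finset ℕ :=
  (Finset.range n).filter fun i => ∃ h : i < n, i < (σ ⟨i, h⟩ : ℕ)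

/-- The excedance number of `σ`. -/
noncomputable def exc (n : ℕ) (σ : Equiv.Perm (Fin n)) : ℕ := (ExcSet n σ).card

/-- `Exd σ`: the descent set of the barred word `σ̄`, obtained from the one-line
notation of `σ` by barring letters in excedance positions, with all barred
letters below all unbarred letters (`1̄ < ⋯ < n̄ < 1 < ⋯ < n`).  Positions are
0-based, so the 1-based element of `Exd(σ)` corresponding to `i` is `i+1`. -/
noncomputable def ExdSet (n : ℕ) (σ : Equiv.Perm (Fin n)) : Finset ℕ :=
  (Finset.range n).filter fun i =>
    ∃ (h1 : i < n) (h2 : i + 1 < n),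
      (¬ i < (σ ⟨i, h1⟩ : ℕ) ∧ i + 1 < (σ ⟨i + 1, h2⟩ : ℕ)) ∨
      ((i < (σ ⟨i, h1⟩ : ℕ) ↔ i + 1 < (σ ⟨i + 1, h2⟩ : ℕ)) ∧
        (σ ⟨i + 1, h2⟩ : ℕ) < (σ ⟨i, h1⟩ : ℕ))

section Aux

variable (n : ℕ) (σ : Equiv.Perm (Fin n))

/-- Integer indicator of an excedance at position `i`. -/
noncomputable def eInd : ℕ → ℤ := fun i =>
  if h : i < n then (if i < (σ ⟨i, h⟩ : ℕ) then 1 else 0) else 0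

/-- Integer indicator of a descent at position `i`. -/
noncomputable def dInd : ℕ → ℤ := fun i =>
  if h : i + 1 < n then
    (if (σ ⟨i + 1, h⟩ : ℕ) < (σ ⟨i, Nat.lt_of_succ_lt h⟩ : ℕ) then 1 else 0)
  else 0

/-- Integer indicator of an `Exd`-descent at position `i`. -/
noncomputable def xInd : ℕ → ℤ := fun i =>
  if h : i + 1 < n then
    (if ((¬ i < (σ ⟨i, Nat.lt_of_succ_lt h⟩ : ℕ) ∧ i + 1 < (σ ⟨i + 1, h⟩ : ℕ)) ∨
        ((i < (σ ⟨i, Nat.lt_of_succ_lt h⟩ : ℕ) ↔ i + 1 < (σ ⟨i + 1, h⟩ : ℕ)) ∧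
          (σ ⟨i + 1, h⟩ : ℕ) < (σ ⟨i, Nat.lt_of_succ_lt h⟩ : ℕ))) then 1 else 0)
  else 0

lemma key_dxe (i : ℕ) : dInd n σ i - xInd n σ i = eInd n σ i - eInd n σ (i + 1) := by
  by_cases h : i + 1 < n
  · have hi : i < n := Nat.lt_of_succ_lt h
    have hne : (σ ⟨i, Nat.lt_of_succ_lt h⟩ : ℕ) ≠ (σ ⟨i + 1, h⟩ : ℕ) := by
      intro hc
      have h1 : σ ⟨i, Nat.lt_of_succ_lt h⟩ = σ ⟨i + 1, h⟩ := Fin.ext hc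
      have := σ.injective h1
      simp [Fin.ext_iff] at this
    simp only [dInd, xInd, eInd, dif_pos h, dif_pos (Nat.lt_of_succ_lt h)]
    split_ifs <;> omega
  · have hi' : ¬ (i + 1 < n) := h
    simp only [dInd, xInd, eInd, dif_neg hi']
    by_cases hi : i < n
    · have hv : (σ ⟨i, hi⟩ : ℕ) < n := (σ ⟨i, hi⟩).isLt
      have : ¬ i < (σ ⟨i, hi⟩ : ℕ) := by omega
      simp [dif_pos hi, this]
    · simp [dif_neg hi]

lemma tele_sum (N : ℕ) :
    ∑ i ∈ Finset.range N, ((i : ℤ) + 1) * (eInd n σ i - eInd n σ (i + 1)) =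
      (∑ i ∈ Finset.range N, eInd n σ i) - N * eInd n σ N := by
  induction N with
  | zero => simp
  | succ N ih =>
      rw [Finset.sum_range_succ, Finset.sum_range_succ
        (f := fun i => eInd n σ i), ih]
      push_cast
      ring

lemma maj_eq : (maj n σ : ℤ) = ∑ i ∈ Finset.range n, ((i : ℤ) + 1) * dInd n σ i := by
  rw [maj, DesSet, Finset.sum_filter]
  push_cast
  refine Finset.sum_congr rfl fun i _ => ?_
  by_cases h : i + 1 < n
  · simp only [dInd, dif_pos h]
    by_cases hlt : σ ⟨i + 1, h⟩ < σ ⟨i, Nat.lt_of_succ_lt h⟩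
    · rw [if_pos ⟨Nat.lt_of_succ_lt h, h, hlt⟩, if_pos (by exact_mod_cast hlt)]
      ring
    · rw [if_neg (by rintro ⟨h1, h2, hl⟩; exact hlt hl),
        if_neg (by exact_mod_cast hlt)]
      ring
  · simp only [dInd, dif_neg h]
    rw [if_neg (by rintro ⟨h1, h2, _⟩; exact h h2)]
    ring

lemma exd_eq :
    ((∑ i ∈ ExdSet n σ, (i + 1) : ℕ) : ℤ) =
      ∑ i ∈ Finset.range n, ((i : ℤ) + 1) * xInd n σ i := by
  rw [ExdSet, Finset.sum_filter]
  push_cast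
  refine Finset.sum_congr rfl fun i _ => ?_
  by_cases h : i + 1 < n
  · simp only [xInd, dif_pos h]
    by_cases hx : (¬ i < (σ ⟨i, Nat.lt_of_succ_lt h⟩ : ℕ) ∧ i + 1 < (σ ⟨i + 1, h⟩ : ℕ)) ∨
        ((i < (σ ⟨i, Nat.lt_of_succ_lt h⟩ : ℕ) ↔ i + 1 < (σ ⟨i + 1, h⟩ : ℕ)) ∧
          (σ ⟨i + 1, h⟩ : ℕ) < (σ ⟨i, Nat.lt_of_succ_lt h⟩ : ℕ))
    · rw [if_pos ⟨Nat.lt_of_succ_lt h, h, hx⟩, if_pos hx]; ring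
    · rw [if_neg (by rintro ⟨h1, h2, hl⟩; exact hx hl), if_neg hx]; ring
  · simp only [xInd, dif_neg h]
    rw [if_neg (by rintro ⟨h1, h2, _⟩; exact h h2)]
    ring

lemma exc_eq : (exc n σ : ℤ) = ∑ i ∈ Finset.range n, eInd n σ i := by
  rw [exc, ExcSet, Finset.card_eq_sum_ones, Finset.sum_filter]
  push_cast
  refine Finset.sum_congr rfl fun i _ => ?_
  by_cases hi : i < n
  · simp only [eInd, dif_pos hi]
    by_cases hx : i < (σ ⟨i, hi⟩ : ℕ)
    · rw [if_pos ⟨hi, hx⟩, if_pos hx]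
    · rw [if_neg (by rintro ⟨h1, hl⟩; exact hx hl), if_neg hx]
  · simp only [eInd, dif_neg hi]
    rw [if_neg (by rintro ⟨h1, _⟩; exact hi h1)]

end Aux

/-- For every `σ ∈ S_n`, `Σ_{i ∈ Exd(σ)} i = maj(σ) − exc(σ)`. -/
theorem sum_exdSet_add_exc_eq_maj (n : ℕ) (σ : Equiv.Perm (Fin n)) :
    (∑ i ∈ ExdSet n σ, (i + 1)) + exc n σ = maj n σ := by
  have hEn : eInd n σ n = 0 := by simp [eInd]
  have htele := tele_sum n σ n
  have hkey : ∑ i ∈ Finset.range n, ((i : ℤ) + 1) * (dInd n σ i - xInd n σ i) =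
      ∑ i ∈ Finset.range n, ((i : ℤ) + 1) * (eInd n σ i - eInd n σ (i + 1)) := by
    refine Finset.sum_congr rfl fun i _ => ?_
    rw [key_dxe]
  have hsplit : ∑ i ∈ Finset.range n, ((i : ℤ) + 1) * (dInd n σ i - xInd n σ i) =
      (∑ i ∈ Finset.range n, ((i : ℤ) + 1) * dInd n σ i) -
        ∑ i ∈ Finset.range n, ((i : ℤ) + 1) * xInd n σ i := by
    rw [← Finset.sum_sub_distrib]
    exact Finset.sum_congr rfl fun i _ => by ring
  have hZ : ((∑ i ∈ ExdSet n σ, (i + 1) : ℕ) : ℤ) + (exc n σ : ℤ) = (maj n σ : ℤ) := by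
    rw [maj_eq, exd_eq, exc_eq]
    rw [hEn] at htele
    rw [hkey, htele] at hsplit
    linarith
  exact_mod_cast hZ
end

section
/- For every permutation σ of {1,...,n}, |Exd(σ)| = des(σ) if σ(1) = 1, and |Exd(σ)| = des(σ) − 1 if σ(1) ≠ 1. -/
open scoped Classical

/-- Descent number. -/
noncomputable def des (n : ℕ) (σ : Equiv.Perm (Fin n)) : ℕ := (DesSet n σ).card

/-- The Exd-descent condition at position `i`. -/
def Pexd (n : ℕ) (σ : Equiv.Perm (Fin n)) (i : ℕ) : Prop :=
  ∃ (h1 : i < n) (h2 : i + 1 < n),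
    (¬ i < (σ ⟨i, h1⟩ : ℕ) ∧ i + 1 < (σ ⟨i + 1, h2⟩ : ℕ)) ∨
    ((i < (σ ⟨i, h1⟩ : ℕ) ↔ i + 1 < (σ ⟨i + 1, h2⟩ : ℕ)) ∧
      (σ ⟨i + 1, h2⟩ : ℕ) < (σ ⟨i, h1⟩ : ℕ))

/-- The ordinary descent condition at position `i`. -/
def Pdes (n : ℕ) (σ : Equiv.Perm (Fin n)) (i : ℕ) : Prop :=
  ∃ (h1 : i < n) (h2 : i + 1 < n), σ ⟨i + 1, h2⟩ < σ ⟨i, h1⟩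

/-- Excedance indicator. -/
noncomputable def Faux (n : ℕ) (σ : Equiv.Perm (Fin n)) (i : ℕ) : ℕ :=
  if h : i < n then (if i < (σ ⟨i, h⟩ : ℕ) then 1 else 0) else 0

/-- `|Exd(σ)| = des(σ)` if `σ(1) = 1`, and
`|Exd(σ)| = des(σ) − 1` otherwise. -/
theorem card_exdSet (n : ℕ) (hn : 0 < n) (σ : Equiv.Perm (Fin n)) :
    (σ ⟨0, hn⟩ = ⟨0, hn⟩ → (ExdSet n σ).card = des n σ) ∧
    (σ ⟨0, hn⟩ ≠ ⟨0, hn⟩ → (ExdSet n σ).card + 1 = des n σ) := by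
  classical
  have hFn : Faux n σ n = 0 := by simp [Faux]
  have key : ∀ i ∈ Finset.range n,
      ((if Pexd n σ i then 1 else 0) + Faux n σ i)
      = (if Pdes n σ i then 1 else 0) + Faux n σ (i + 1) := by
    intro i hi
    have h1 : i < n := Finset.mem_range.mp hi
    have hFi : Faux n σ i = if i < (σ ⟨i, h1⟩ : ℕ) then 1 else 0 := by
      simp [Faux, h1]
    by_cases h2 : i + 1 < n
    · have hFi1 : Faux n σ (i + 1) = if i + 1 < (σ ⟨i + 1, h2⟩ : ℕ) then 1 else 0 := by
        simp [Faux, h2]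
      have hP : Pexd n σ i ↔
          ((¬ i < (σ ⟨i, h1⟩ : ℕ) ∧ i + 1 < (σ ⟨i + 1, h2⟩ : ℕ)) ∨
          ((i < (σ ⟨i, h1⟩ : ℕ) ↔ i + 1 < (σ ⟨i + 1, h2⟩ : ℕ)) ∧
            (σ ⟨i + 1, h2⟩ : ℕ) < (σ ⟨i, h1⟩ : ℕ))) :=
        ⟨fun ⟨_, _, h⟩ => h, fun h => ⟨h1, h2, h⟩⟩
      have hQ : Pdes n σ i ↔ (σ ⟨i + 1, h2⟩ : ℕ) < (σ ⟨i, h1⟩ : ℕ) := by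
        constructor
        · rintro ⟨_, _, h⟩; exact h
        · intro h; exact ⟨h1, h2, h⟩
      rw [hFi, hFi1, if_congr hP rfl rfl, if_congr hQ rfl rfl]
      have hne : (σ ⟨i + 1, h2⟩ : ℕ) ≠ (σ ⟨i, h1⟩ : ℕ) := by
        intro h
        have := σ.injective (Fin.val_injective h)
        simp [Fin.ext_iff] at this
      split_ifs <;> omega
    · have hP : ¬ Pexd n σ i := by
        rintro ⟨_, h2', _⟩; exact h2 h2'
      have hQ : ¬ Pdes n σ i := by
        rintro ⟨_, h2', _⟩; exact h2 h2'
      have hFi1 : Faux n σ (i + 1) = 0 := by simp [Faux, h2]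
      have hlt : (σ ⟨i, h1⟩ : ℕ) < n := (σ ⟨i, h1⟩).isLt
      have hna : ¬ i < (σ ⟨i, h1⟩ : ℕ) := by omega
      rw [if_neg hP, if_neg hQ, hFi, if_neg hna, hFi1]
  have hcardE : (ExdSet n σ).card = ∑ i ∈ Finset.range n,
      (if Pexd n σ i then 1 else 0) := by
    rw [ExdSet, Finset.card_filter]; exact Finset.sum_congr rfl fun i _ => if_congr Iff.rfl rfl rfl
  have hcardD : des n σ = ∑ i ∈ Finset.range n,
      (if Pdes n σ i then 1 else 0) := by
    rw [des, DesSet, Finset.card_filter]; exact Finset.sum_congr rfl fun i _ => if_congr Iff.rfl rfl rfl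
  have hsum := Finset.sum_congr rfl key
  rw [Finset.sum_add_distrib, Finset.sum_add_distrib] at hsum
  have hshift : ∑ i ∈ Finset.range (n + 1), Faux n σ i
      = (∑ i ∈ Finset.range n, Faux n σ (i + 1)) + Faux n σ 0 :=
    Finset.sum_range_succ' _ n
  have hsucc : ∑ i ∈ Finset.range (n + 1), Faux n σ i
      = (∑ i ∈ Finset.range n, Faux n σ i) + Faux n σ n :=
    Finset.sum_range_succ _ n
  have hmain : (ExdSet n σ).card + Faux n σ 0 = des n σ := by
    rw [hcardE, hcardD]; omega
  have hF0 : Faux n σ 0 = if 0 < (σ ⟨0, hn⟩ : ℕ) then 1 else 0 := by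
    simp [Faux, hn]
  constructor
  · intro h
    have : (σ ⟨0, hn⟩ : ℕ) = 0 := by rw [h]
    rw [hF0, if_neg (by omega)] at hmain
    omega
  · intro h
    have : (σ ⟨0, hn⟩ : ℕ) ≠ 0 := by
      intro h0; exact h (Fin.ext h0)
    rw [hF0, if_pos (by omega)] at hmain
    omega
end

section
/- For all n ≥ 2 and all q, [n]_q! = (1+q)[n−1]_q! + Σ_{j=2}^{n−1} [n−1 choose j−1]_q · q^j · [j−1]_q! · [n−j]_q!. -/
/-- `[m]_q`. -/
def qint {R : Type*} [CommSemiring R] (q : R) (m : ℕ) : R :=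
  ∑ i ∈ Finset.range m, q ^ i

/-- `[m]_q!`. -/
def qfact {R : Type*} [CommSemiring R] (q : R) (m : ℕ) : R :=
  ∏ i ∈ Finset.range m, qint q (i + 1)

/-- Gaussian (q-)binomial coefficient, via the q-Pascal recurrence. -/
def qbinom {R : Type*} [CommSemiring R] (q : R) : ℕ → ℕ → R
  | _, 0 => 1
  | 0, _ + 1 => 0
  | n + 1, k + 1 => qbinom q n k + q ^ (k + 1) * qbinom q n (k + 1)

lemma qfact_succ {R : Type*} [CommSemiring R] (q : R) (n : ℕ) :
    qfact q (n + 1) = qfact q n * qint q (n + 1) :=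
  Finset.prod_range_succ _ _

lemma qint_add {R : Type*} [CommSemiring R] (q : R) (a b : ℕ) :
    qint q (a + b) = qint q a + q ^ a * qint q b := by
  simp [qint, Finset.sum_range_add, Finset.mul_sum, pow_add]

lemma qbinom_zero_right {R : Type*} [CommSemiring R] (q : R) (n : ℕ) :
    qbinom q n 0 = 1 := by
  cases n <;> rfl

lemma qbinom_eq_zero {R : Type*} [CommSemiring R] (q : R) :
    ∀ n k : ℕ, n < k → qbinom q n k = 0 := by
  intro n
  induction n with
  | zero =>
    intro k hk
    cases k with
    | zero => omega
    | succ k => rfl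
  | succ n ih =>
    intro k hk
    cases k with
    | zero => omega
    | succ k =>
      show qbinom q n k + q ^ (k + 1) * qbinom q n (k + 1) = 0
      rw [ih k (by omega), ih (k + 1) (by omega)]
      ring

lemma qbinom_self {R : Type*} [CommSemiring R] (q : R) (n : ℕ) :
    qbinom q n n = 1 := by
  induction n with
  | zero => rfl
  | succ n ih =>
    show qbinom q n n + q ^ (n + 1) * qbinom q n (n + 1) = 1
    rw [ih, qbinom_eq_zero q n (n + 1) (by omega)]
    ring

lemma qbinom_mul_qfact {R : Type*} [CommRing R] (q : R) :
    ∀ n a b : ℕ, a + b = n → qbinom q n a * qfact q a * qfact q b = qfact q n := by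
  intro n
  induction n with
  | zero =>
    intro a b h
    obtain rfl : a = 0 := by omega
    obtain rfl : b = 0 := by omega
    simp [qbinom_zero_right, qfact]
  | succ m ih =>
    intro a b h
    match a, b with
    | 0, b =>
      obtain rfl : b = m + 1 := by omega
      simp [qbinom_zero_right, qfact]
    | a + 1, 0 =>
      obtain rfl : a = m := by omega
      simp [qbinom_self, qfact]
    | a + 1, b + 1 =>
      have e1 := ih a (b + 1) (by omega)
      have e2 := ih (a + 1) b (by omega)
      have e3 : qint q (m + 1) = qint q (a + 1) + q ^ (a + 1) * qint q (b + 1) := by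
        rw [show m + 1 = (a + 1) + (b + 1) by omega]
        exact qint_add q (a + 1) (b + 1)
      rw [qfact_succ q b] at e1
      rw [qfact_succ q a] at e2
      show (qbinom q m a + q ^ (a + 1) * qbinom q m (a + 1)) * qfact q (a + 1) * qfact q (b + 1)
          = qfact q (m + 1)
      rw [qfact_succ q m, qfact_succ q a, qfact_succ q b]
      linear_combination qint q (a + 1) * e1 + q ^ (a + 1) * qint q (b + 1) * e2 +
        (- qfact q m) * e3

lemma qint_split {R : Type*} [CommRing R] (q : R) :
    ∀ m : ℕ, 1 ≤ m → qint q (m + 1) = 1 + q + ∑ j ∈ Finset.Icc 2 m, q ^ j := by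
  intro m hm
  induction m with
  | zero => omega
  | succ k ih =>
    rcases Nat.lt_or_ge k 1 with hk | hk
    · obtain rfl : k = 0 := by omega
      simp [qint, Finset.sum_range_succ]
    · rw [Finset.sum_Icc_succ_top (show 2 ≤ k + 1 by omega),
        show qint q (k + 1 + 1) = qint q (k + 1) + q ^ (k + 1) from Finset.sum_range_succ _ _,
        ih hk]
      ring

/-- For all `n ≥ 2` and all `q`,
`[n]_q! = (1+q)[n−1]_q! + Σ_{j=2}^{n−1} [n−1 choose j−1]_q q^j [j−1]_q! [n−j]_q!`. -/
theorem qfactorial_recurrence {R : Type*} [CommRing R] (q : R) (n : ℕ) (hn : 2 ≤ n) :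
    qfact q n = (1 + q) * qfact q (n - 1) +
      ∑ j ∈ Finset.Icc 2 (n - 1),
        qbinom q (n - 1) (j - 1) * q ^ j * qfact q (j - 1) * qfact q (n - j) := by
  obtain ⟨m, rfl⟩ : ∃ m, n = m + 1 := ⟨n - 1, by omega⟩
  have hm : 1 ≤ m := by omega
  simp only [Nat.add_sub_cancel]
  have hs : ∀ j ∈ Finset.Icc 2 m,
      qbinom q m (j - 1) * q ^ j * qfact q (j - 1) * qfact q (m + 1 - j)
        = q ^ j * qfact q m := by
    intro j hj
    rw [Finset.mem_Icc] at hj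
    have key := qbinom_mul_qfact q m (j - 1) (m + 1 - j) (by omega)
    linear_combination q ^ j * key
  rw [Finset.sum_congr rfl hs, ← Finset.sum_mul, qfact_succ, qint_split q m hm]
  ring
end

section
/- For 0 ≤ k ≤ 2n, the number of k-dimensional totally isotropic subspaces of F_q^{2n} (with respect to a nondegenerate alternating bilinear form) is [n choose k]_q · Π_{i=n−k+1}^{n} (q^i + 1); in particular every maximal totally isotropic subspace has dimension n. -/
/-!
Count isotropic frames, i.e. linearly independent `k`-tuples of pairwise orthogonal vectors, in
two ways. Building a frame one vector at a time, a frame spanning `W` extends by exactly the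
vectors of `W^⊥ \ W`; as `dim W^⊥ = 2n - dim W`, there are `∏_{i<k} (q^(2n-i) - q^i)` frames.
On the other hand each `k`-dimensional totally isotropic subspace carries `∏_{i<k} (q^k - q^i)`
frames, namely its ordered bases. Dividing, and using the Gauss identity
`[n choose k]_q · ∏_{j<k} (q^(j+1) - 1) = ∏_{j<k} (q^(n-j) - 1)`, gives the count.

A totally isotropic `U` satisfies `U ≤ U^⊥`, so `2 dim U ≤ 2n`; if the inequality is strict,
any `v ∈ U^⊥ \ U` can be added to `U` keeping it totally isotropic, so `U` is not maximal.
-/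

open Finset Module LinearMap

section QBinomial

variable {R : Type*}

theorem qbinom_eq_zero_of_lt [CommSemiring R] (q : R) : ∀ {n k : ℕ}, n < k → qbinom q n k = 0
  | 0, _ + 1, _ => rfl
  | n + 1, k + 1, h => by
    rw [qbinom, qbinom_eq_zero_of_lt q (by omega), qbinom_eq_zero_of_lt q (by omega), mul_zero,
      add_zero]

@[simp, norm_cast]
theorem Nat.cast_qbinom [CommSemiring R] (q : ℕ) :
    ∀ n k : ℕ, ((qbinom q n k : ℕ) : R) = qbinom (q : R) n k
  | _, 0 => by simp [qbinom]
  | 0, _ + 1 => by simp [qbinom]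
  | n + 1, k + 1 => by simp [qbinom, Nat.cast_qbinom q n]

theorem qbinom_mul_prod_pow_succ_sub_one [CommRing R] (q : R) :
    ∀ n k : ℕ,
      qbinom q n k * ∏ j ∈ range k, (q ^ (j + 1) - 1) = ∏ j ∈ range k, (q ^ (n - j) - 1)
  | _, 0 => by simp [qbinom]
  | 0, k + 1 => by simp [qbinom, prod_range_succ']
  | n + 1, k + 1 => by
    have ih₁ := qbinom_mul_prod_pow_succ_sub_one q n k
    have ih₂ := qbinom_mul_prod_pow_succ_sub_one q n (k + 1)
    rw [prod_range_succ, prod_range_succ] at ih₂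
    -- `q ^ (k + 1) * q ^ (n - k) = q ^ (n + 1)` fails for `k > n`, but then the product vanishes.
    have hpow : (∏ j ∈ range k, (q ^ (n - j) - 1)) * (q ^ (k + 1) * q ^ (n - k)) =
        (∏ j ∈ range k, (q ^ (n - j) - 1)) * q ^ (n + 1) := by
      rcases le_or_gt k n with hkn | hnk
      · rw [← pow_add, Nat.add_right_comm, Nat.add_sub_cancel' hkn]
      · rw [prod_eq_zero (mem_range.2 hnk) (by simp), zero_mul, zero_mul]
    rw [qbinom, prod_range_succ, prod_range_succ']
    simp only [Nat.add_sub_add_right, Nat.sub_zero]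
    linear_combination (q ^ (k + 1) - 1) * ih₁ + q ^ (k + 1) * ih₂ + hpow

theorem prod_Icc_eq_prod_range_sub [CommMonoid R] (f : ℕ → R) {n k : ℕ} (hk : k ≤ n) :
    ∏ i ∈ Icc (n - k + 1) n, f i = ∏ i ∈ range k, f (n - i) := by
  rw [range_eq_Ico, prod_Ico_reflect f 0 (by omega), ← Ico_add_one_right_eq_Icc,
    Nat.sub_zero, Nat.sub_add_comm hk]

theorem pow_sub_pow_eq_mul [CommRing R] (q : R) {i m : ℕ} (h : i ≤ m) :
    q ^ m - q ^ i = q ^ i * (q ^ (m - i) - 1) := by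
  rw [mul_sub, ← pow_add, Nat.add_sub_cancel' h, mul_one]

theorem qbinom_mul_prod_eq [CommRing R] (q : R) {n k : ℕ} (hk : k ≤ n) :
    (qbinom q n k * ∏ i ∈ Icc (n - k + 1) n, (q ^ i + 1)) * ∏ i ∈ range k, (q ^ k - q ^ i) =
      ∏ i ∈ range k, (q ^ (2 * n - i) - q ^ i) := by
  have hbases : ∏ i ∈ range k, (q ^ k - q ^ i) =
      (∏ i ∈ range k, q ^ i) * ∏ j ∈ range k, (q ^ (j + 1) - 1) := by
    rw [← prod_range_reflect (fun j ↦ q ^ (j + 1) - 1), ← prod_mul_distrib]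
    refine prod_congr rfl fun i hi ↦ ?_
    rw [mem_range] at hi
    rw [pow_sub_pow_eq_mul q hi.le, show k - 1 - i + 1 = k - i by omega]
  have hframes : ∏ i ∈ range k, (q ^ (2 * n - i) - q ^ i) =
      (∏ i ∈ range k, q ^ i) * ∏ i ∈ range k, ((q ^ (n - i) - 1) * (q ^ (n - i) + 1)) := by
    rw [← prod_mul_distrib]
    refine prod_congr rfl fun i hi ↦ ?_
    rw [mem_range] at hi
    rw [pow_sub_pow_eq_mul q (by omega : i ≤ 2 * n - i),
      show 2 * n - i - i = 2 * (n - i) by omega, pow_mul']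
    ring
  rw [hbases, hframes, prod_mul_distrib, prod_Icc_eq_prod_range_sub _ hk,
    ← qbinom_mul_prod_pow_succ_sub_one q n k]
  ring

theorem Nat.qbinom_mul_prod_eq (q : ℕ) (hq : 0 < q) {n k : ℕ} (hk : k ≤ n) :
    (qbinom q n k * ∏ i ∈ Icc (n - k + 1) n, (q ^ i + 1)) * ∏ i ∈ range k, (q ^ k - q ^ i) =
      ∏ i ∈ range k, (q ^ (2 * n - i) - q ^ i) := by
  apply Nat.cast_injective (R := ℤ)
  have hcast : ∀ {a b : ℕ}, a ≤ b → ((q ^ b - q ^ a : ℕ) : ℤ) = (q : ℤ) ^ b - q ^ a :=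
    fun h ↦ by rw [Nat.cast_sub (Nat.pow_le_pow_right hq h), Nat.cast_pow, Nat.cast_pow]
  push_cast
  rw [prod_congr rfl fun i hi ↦ hcast (mem_range.1 hi).le,
    prod_congr rfl fun i hi ↦ hcast (show i ≤ 2 * n - i by have := mem_range.1 hi; omega)]
  exact _root_.qbinom_mul_prod_eq (q : ℤ) hk

end QBinomial

theorem Nat.card_eq_card_mul_of_card_fiber {A S : Type*} [Finite A] [Finite S] (f : A → S)
    {c : ℕ} (h : ∀ s, Nat.card {a // f a = s} = c) : Nat.card A = Nat.card S * c := by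
  have := Fintype.ofFinite S
  rw [← Nat.card_congr (Equiv.sigmaFiberEquiv f), Nat.card_sigma, sum_congr rfl fun s _ ↦ h s,
    sum_const, Finset.card_univ, smul_eq_mul, Nat.card_eq_fintype_card]

section Isotropic

variable {F V : Type*} [Field F] [AddCommGroup V] [Module F V]

def LinearMap.BilinForm.IsTotallyIsotropic (B : LinearMap.BilinForm F V) (s : Set V) : Prop :=
  ∀ u ∈ s, ∀ v ∈ s, B u v = 0

namespace LinearMap.BilinForm

variable {B : LinearMap.BilinForm F V} {s : Set V} {v : V}

theorem mem_orthogonal_span_iff :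
    v ∈ B.orthogonal (Submodule.span F s) ↔ ∀ u ∈ s, B u v = 0 :=
  ⟨fun h u hu ↦ h u (Submodule.subset_span hu),
    fun h _ hu ↦ (Submodule.span_le (p := ker (B.flip v))).2 h hu⟩

theorem IsTotallyIsotropic.mono {t : Set V} (ht : B.IsTotallyIsotropic t) (hst : s ⊆ t) :
    B.IsTotallyIsotropic s :=
  fun u hu v hv ↦ ht u (hst hu) v (hst hv)

theorem isTotallyIsotropic_iff_le_orthogonal {U : Submodule F V} :
    B.IsTotallyIsotropic U ↔ U ≤ B.orthogonal U :=
  ⟨fun h _ hv u hu ↦ h u hu _ hv, fun h u hu _ hv ↦ h hv u hu⟩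

theorem IsTotallyIsotropic.span (hs : B.IsTotallyIsotropic s) :
    B.IsTotallyIsotropic (Submodule.span F s) :=
  isTotallyIsotropic_iff_le_orthogonal.2 <|
    Submodule.span_le.2 fun v hv ↦ mem_orthogonal_span_iff.2 fun u hu ↦ hs u hu v hv

theorem isTotallyIsotropic_insert_iff (hB : B.IsAlt) :
    B.IsTotallyIsotropic (insert v s) ↔
      B.IsTotallyIsotropic s ∧ v ∈ B.orthogonal (Submodule.span F s) := by
  simp only [IsTotallyIsotropic, Set.forall_mem_insert, hB.self_eq_zero, mem_orthogonal_span_iff,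
    hB.eq_iff (y := v), true_and]
  aesop

end LinearMap.BilinForm

variable (B : LinearMap.BilinForm F V)

abbrev IsotropicFrame (k : ℕ) : Type _ :=
  {t : Fin k → V // LinearIndependent F t ∧ B.IsTotallyIsotropic (Set.range t)}

abbrev IsotropicSubspace (k : ℕ) : Type _ :=
  {U : Submodule F V // B.IsTotallyIsotropic U ∧ finrank F U = k}

variable {B}

def IsotropicFrame.init {k : ℕ} (t : IsotropicFrame B (k + 1)) : IsotropicFrame B k :=
  ⟨Fin.init t.1, t.2.1.comp _ (Fin.castSucc_injective k),
    t.2.2.mono (Set.range_comp_subset_range Fin.castSucc t.1)⟩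

def IsotropicFrame.span {k : ℕ} (t : IsotropicFrame B k) : IsotropicSubspace B k :=
  ⟨Submodule.span F (Set.range t.1), t.2.2.span,
    (finrank_span_eq_card t.2.1).trans (Fintype.card_fin k)⟩

theorem linearIndependent_snoc_and_isTotallyIsotropic_iff (hB : B.IsAlt) {k : ℕ}
    {t : Fin k → V} {v : V} :
    (LinearIndependent F (Fin.snoc t v) ∧ B.IsTotallyIsotropic (Set.range (Fin.snoc t v))) ↔
      (LinearIndependent F t ∧ B.IsTotallyIsotropic (Set.range t)) ∧
        v ∈ (B.orthogonal (Submodule.span F (Set.range t)) : Set V) \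
          Submodule.span F (Set.range t) := by
  rw [linearIndependent_finSnoc, Fin.range_snoc, B.isTotallyIsotropic_insert_iff hB]
  exact ⟨fun ⟨⟨hli, hv⟩, hiso, hort⟩ ↦ ⟨⟨hli, hiso⟩, hort, hv⟩,
    fun ⟨⟨hli, hiso⟩, hort, hv⟩ ↦ ⟨⟨hli, hv⟩, hiso, hort⟩⟩

def IsotropicFrame.initFiberEquiv (hB : B.IsAlt) {k : ℕ} (t : IsotropicFrame B k) :
    {s : IsotropicFrame B (k + 1) // s.init = t} ≃
      ↥((B.orthogonal (Submodule.span F (Set.range t.1)) : Set V) \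
        Submodule.span F (Set.range t.1)) where
  toFun s := ⟨s.1.1 (Fin.last k), by
    obtain ⟨⟨s, hs⟩, rfl⟩ := s
    rw [← Fin.snoc_init_self s, linearIndependent_snoc_and_isTotallyIsotropic_iff hB] at hs
    exact hs.2⟩
  invFun v :=
    ⟨⟨Fin.snoc t.1 v,
        (linearIndependent_snoc_and_isTotallyIsotropic_iff hB).2 ⟨t.2, v.2⟩⟩,
      Subtype.ext (Fin.init_snoc (α := fun _ ↦ V) v.1 t.1)⟩
  left_inv := by
    rintro ⟨s, rfl⟩
    exact Subtype.ext (Subtype.ext (Fin.snoc_init_self s.1))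
  right_inv v := Subtype.ext (Fin.snoc_last (α := fun _ ↦ V) v.1 t.1)

def IsotropicFrame.spanFiberEquiv [FiniteDimensional F V] {k : ℕ}
    (U : IsotropicSubspace B k) :
    {t : IsotropicFrame B k // t.span = U} ≃ {s : Fin k → U.1 // LinearIndependent F s} where
  toFun t :=
    ⟨fun i ↦ ⟨t.1.1 i, (congrArg Subtype.val t.2).le (Submodule.subset_span ⟨i, rfl⟩)⟩,
      LinearIndependent.of_comp U.1.subtype t.1.2.1⟩
  invFun s := by
    have hli : LinearIndependent F (U.1.subtype ∘ s.1) := s.2.map' _ (Submodule.ker_subtype _)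
    have hrange : Set.range (U.1.subtype ∘ s.1) ⊆ U.1 := by
      rintro _ ⟨i, rfl⟩; exact (s.1 i).2
    refine ⟨⟨U.1.subtype ∘ s.1, hli, U.2.1.mono hrange⟩, Subtype.ext ?_⟩
    refine Submodule.eq_of_le_of_finrank_eq (Submodule.span_le.2 hrange) ?_
    exact (IsotropicFrame.span _).2.2.trans U.2.2.symm
  left_inv _ := rfl
  right_inv _ := rfl

theorem two_mul_finrank_le_of_isTotallyIsotropic [FiniteDimensional F V] (hnd : B.Nondegenerate)
    {U : Submodule F V} (hU : B.IsTotallyIsotropic U) : 2 * finrank F U ≤ finrank F V := by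
  have h := Submodule.finrank_mono (B.isTotallyIsotropic_iff_le_orthogonal.1 hU)
  rw [B.finrank_orthogonal hnd] at h
  have := U.finrank_le
  omega

theorem two_mul_finrank_eq_of_maximal [FiniteDimensional F V] (hB : B.IsAlt)
    (hnd : B.Nondegenerate) {U : Submodule F V} (hU : B.IsTotallyIsotropic U)
    (hmax : ∀ W : Submodule F V, B.IsTotallyIsotropic W → U ≤ W → U = W) :
    2 * finrank F U = finrank F V := by
  by_contra hne
  have hlt : U < B.orthogonal U := by
    refine lt_of_le_of_ne (B.isTotallyIsotropic_iff_le_orthogonal.1 hU) fun h ↦ hne ?_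
    have horth := B.finrank_orthogonal hnd U
    rw [← h] at horth
    have := U.finrank_le
    omega
  obtain ⟨v, hvorth, hvU⟩ := SetLike.exists_of_lt hlt
  have hW : B.IsTotallyIsotropic (Submodule.span F (insert v U)) :=
    ((B.isTotallyIsotropic_insert_iff hB).2 ⟨hU, by rwa [Submodule.span_eq]⟩).span
  have hUW := hmax _ hW fun u hu ↦ Submodule.subset_span (Set.mem_insert_of_mem v hu)
  exact hvU (hUW ▸ Submodule.subset_span (Set.mem_insert v _))

variable [Fintype F] [Finite V]

local notation "q" => Fintype.card F

theorem Submodule.card_sdiff {U W : Submodule F V} (h : U ≤ W) :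
    Nat.card ↥((W : Set V) \ U) = q ^ finrank F W - q ^ finrank F U := by
  rw [Nat.card_coe_set_eq, Set.ncard_sdiff h, ← Nat.card_coe_set_eq, ← Nat.card_coe_set_eq,
    SetLike.coe_sort_coe, SetLike.coe_sort_coe, natCard_eq_pow_finrank (K := F) (V := W),
    natCard_eq_pow_finrank (K := F) (V := U), Nat.card_eq_fintype_card]

instance (k : ℕ) : Finite (IsotropicFrame B k) := Subtype.finite

instance (k : ℕ) : Finite (IsotropicSubspace B k) := Subtype.finite

theorem card_isotropicFrame_succ (hB : B.IsAlt) (hnd : B.Nondegenerate) (k : ℕ) :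
    Nat.card (IsotropicFrame B (k + 1)) =
      Nat.card (IsotropicFrame B k) * (q ^ (finrank F V - k) - q ^ k) := by
  refine Nat.card_eq_card_mul_of_card_fiber IsotropicFrame.init fun t ↦ ?_
  have hspan : finrank F (Submodule.span F (Set.range t.1)) = k := (IsotropicFrame.span t).2.2
  rw [Nat.card_congr (t.initFiberEquiv hB), Submodule.card_sdiff
      (BilinForm.isTotallyIsotropic_iff_le_orthogonal.1 t.2.2.span), B.finrank_orthogonal hnd,
    hspan]

theorem card_isotropicFrame (hB : B.IsAlt) (hnd : B.Nondegenerate) (k : ℕ) :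
    Nat.card (IsotropicFrame B k) = ∏ i ∈ range k, (q ^ (finrank F V - i) - q ^ i) := by
  induction k with
  | zero =>
    rw [prod_range_zero, Nat.card_eq_one_iff_exists]
    exact ⟨⟨Fin.elim0, linearIndependent_empty_type, by simp [BilinForm.IsTotallyIsotropic]⟩,
      fun t ↦ Subtype.ext (funext fun i ↦ i.elim0)⟩
  | succ k ih => rw [card_isotropicFrame_succ hB hnd, ih, prod_range_succ]

theorem card_isotropicFrame_eq_card_isotropicSubspace_mul (k : ℕ) :
    Nat.card (IsotropicFrame B k) =
      Nat.card (IsotropicSubspace B k) * ∏ i ∈ range k, (q ^ k - q ^ i) := by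
  refine Nat.card_eq_card_mul_of_card_fiber IsotropicFrame.span fun U ↦ ?_
  rw [Nat.card_congr (IsotropicFrame.spanFiberEquiv U), card_linearIndependent U.2.2.ge, U.2.2,
    Fin.prod_univ_eq_prod_range (fun i ↦ q ^ k - q ^ i)]

theorem card_isotropicSubspace (hB : B.IsAlt) (hnd : B.Nondegenerate) {n k : ℕ}
    (hV : finrank F V = 2 * n) :
    Nat.card (IsotropicSubspace B k) = qbinom q n k * ∏ i ∈ Icc (n - k + 1) n, (q ^ i + 1) := by
  rcases le_or_gt k n with hkn | hnk
  · have hbases : 0 < ∏ i ∈ range k, (q ^ k - q ^ i) := prod_pos fun i hi ↦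
      Nat.sub_pos_of_lt (Nat.pow_lt_pow_right Fintype.one_lt_card (mem_range.1 hi))
    refine Nat.eq_of_mul_eq_mul_right hbases ?_
    rw [← card_isotropicFrame_eq_card_isotropicSubspace_mul, card_isotropicFrame hB hnd, hV,
      Nat.qbinom_mul_prod_eq q Fintype.card_pos hkn]
  · have : IsEmpty (IsotropicSubspace B k) := ⟨fun U ↦ by
      have := two_mul_finrank_le_of_isTotallyIsotropic hnd U.2.1
      omega⟩
    rw [Nat.card_of_isEmpty, qbinom_eq_zero_of_lt _ hnk, zero_mul]

end Isotropic

theorem isotropic_subspace_count_general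
    (F : Type*) [Field F] [Fintype F] (n k : ℕ)
    (B : (Fin (2 * n) → F) →ₗ[F] (Fin (2 * n) → F) →ₗ[F] F)
    (halt : ∀ v, B v v = 0)
    (hnondeg : ∀ v, (∀ w, B v w = 0) → v = 0) :
    Nat.card {U : Submodule F (Fin (2 * n) → F) //
        (∀ u ∈ U, ∀ v ∈ U, B u v = 0) ∧ Module.finrank F U = k} =
      qbinom (Fintype.card F) n k *
        ∏ i ∈ Finset.Icc (n - k + 1) n, ((Fintype.card F) ^ i + 1)
    ∧ ∀ U : Submodule F (Fin (2 * n) → F), (∀ u ∈ U, ∀ v ∈ U, B u v = 0) →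
        (∀ W : Submodule F (Fin (2 * n) → F),
          (∀ u ∈ W, ∀ v ∈ W, B u v = 0) → U ≤ W → U = W) →
        Module.finrank F U = n := by
  have hnd : B.Nondegenerate := (IsAlt.isRefl halt).nondegenerate_iff_separatingLeft.2 hnondeg
  have hV : finrank F (Fin (2 * n) → F) = 2 * n := finrank_fin_fun F
  refine ⟨card_isotropicSubspace halt hnd hV, fun U hU hmax ↦ ?_⟩
  have := two_mul_finrank_eq_of_maximal halt hnd hU hmax
  omega

/-- Over a finite field `F` with `q` elements, given a
nondegenerate alternating bilinear form `B` on `F^{2n}`, the number of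
`k`-dimensional totally isotropic subspaces is
`[n choose k]_q · Π_{i=n−k+1}^n (q^i + 1)`, and every maximal totally
isotropic subspace has dimension `n`. -/
theorem isotropic_subspace_count
    (F : Type*) [Field F] [Fintype F] (n k : ℕ) (hk : k ≤ 2 * n)
    (B : (Fin (2 * n) → F) →ₗ[F] (Fin (2 * n) → F) →ₗ[F] F)
    (halt : ∀ v, B v v = 0)
    (hnondeg : ∀ v, (∀ w, B v w = 0) → v = 0) :
    Nat.card {U : Submodule F (Fin (2 * n) → F) //
        (∀ u ∈ U, ∀ v ∈ U, B u v = 0) ∧ Module.finrank F U = k} =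
      qbinom (Fintype.card F) n k *
        ∏ i ∈ Finset.Icc (n - k + 1) n, ((Fintype.card F) ^ i + 1)
    ∧ ∀ U : Submodule F (Fin (2 * n) → F), (∀ u ∈ U, ∀ v ∈ U, B u v = 0) →
        (∀ W : Submodule F (Fin (2 * n) → F),
          (∀ u ∈ W, ∀ v ∈ W, B u v = 0) → U ≤ W → U = W) →
        Module.finrank F U = n :=
  isotropic_subspace_count_general F n k B halt hnondeg
end

section
/- For all n ≥ 0 and 0 ≤ j ≤ n, the identity Π_{i=j+1}^{n} (1+q^i) = Σ_{k≥0} [j choose k]_q · q^{k²} · Π_{i=k+1}^{n} (1+q^i) · (−1)^k holds as polynomials in q; equivalently q^{j²}(−1)^j = Σ_{k≥0} [j choose k]_q (−1)^{j−k} q^{binom(j−k,2)} Π_{i=k+1}^{j} (1+q^i). -/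
lemma prod_Ioc_bot {M : Type*} [CommMonoid M] (f : ℕ → M) {a b : ℕ} (h : a < b) :
    ∏ i ∈ Finset.Ioc a b, f i = f (a + 1) * ∏ i ∈ Finset.Ioc (a + 1) b, f i := by
  rw [← Finset.prod_Ioc_consecutive f (Nat.le_succ a) h, Nat.Ioc_succ_singleton,
    Finset.prod_singleton]

lemma auxT {R : Type*} [CommRing R] (q : R) :
    ∀ j m : ℕ, (∑ k ∈ Finset.range (j + 1),
      qbinom q j k * q ^ (k ^ 2 + m * k) * (∏ i ∈ Finset.Ioc (k + m) (j + m), (1 + q ^ i)) *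
        (-1 : R) ^ k) = 1 := by
  intro j
  induction j with
  | zero => intro m; simp [qbinom]
  | succ j ih =>
    intro m
    have key : (∑ k ∈ Finset.range (j + 2),
        qbinom q (j + 1) k * q ^ (k ^ 2 + m * k) *
          (∏ i ∈ Finset.Ioc (k + m) (j + 1 + m), (1 + q ^ i)) * (-1 : R) ^ k)
        = ∑ k ∈ Finset.range (j + 1),
          qbinom q j k * q ^ (k ^ 2 + (m + 1) * k) *
            (∏ i ∈ Finset.Ioc (k + (m + 1)) (j + (m + 1)), (1 + q ^ i)) * (-1 : R) ^ k := by
      set B : ℕ → R := fun t =>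
        qbinom q j t * q ^ (t ^ 2 + m * t + t) *
          (∏ i ∈ Finset.Ioc (t + m) (j + 1 + m), (1 + q ^ i)) * (-1 : R) ^ t with hB
      set C : ℕ → R := fun k =>
        qbinom q j k * q ^ ((k + 1) ^ 2 + m * (k + 1)) *
          (∏ i ∈ Finset.Ioc (k + 1 + m) (j + 1 + m), (1 + q ^ i)) * (-1 : R) ^ (k + 1) with hC
      rw [Finset.sum_range_succ']
      have step1 : ∀ k ∈ Finset.range (j + 1),
          qbinom q (j + 1) (k + 1) * q ^ ((k + 1) ^ 2 + m * (k + 1)) *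
            (∏ i ∈ Finset.Ioc (k + 1 + m) (j + 1 + m), (1 + q ^ i)) * (-1 : R) ^ (k + 1)
          = C k + B (k + 1) := by
        intro k _
        rw [hB, hC, qbinom]
        simp only
        have h1 : k + 1 + m = k + m + 1 := by omega
        rw [h1]
        ring
      rw [Finset.sum_congr rfl step1, Finset.sum_add_distrib]
      have hf0 : qbinom q (j + 1) 0 * q ^ (0 ^ 2 + m * 0) *
          (∏ i ∈ Finset.Ioc (0 + m) (j + 1 + m), (1 + q ^ i)) * (-1 : R) ^ 0 = B 0 := by
        rw [hB]; simp [qbinom]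
      rw [add_assoc, hf0, ← Finset.sum_range_succ' B (j + 1), Finset.sum_range_succ B (j + 1),
        show B (j + 1) = 0 by rw [hB]; simp [qbinom_eq_zero q j (j+1) (by omega)]]
      rw [add_zero, ← Finset.sum_add_distrib]
      refine Finset.sum_congr rfl ?_
      intro k hk
      have hk' : k ≤ j := by simpa [Nat.lt_succ_iff] using hk
      rw [hB, hC]
      simp only
      have hsplit : ∏ i ∈ Finset.Ioc (k + m) (j + 1 + m), (1 + q ^ i)
          = (1 + q ^ (k + m + 1)) * ∏ i ∈ Finset.Ioc (k + m + 1) (j + 1 + m), (1 + q ^ i) :=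
        prod_Ioc_bot _ (by omega)
      have h1 : k + 1 + m = k + m + 1 := by omega
      have h2 : k + (m + 1) = k + m + 1 := by omega
      have h3 : j + (m + 1) = j + 1 + m := by omega
      rw [hsplit, h1, h2, h3]
      ring
    rw [key, ih (m + 1)]

lemma auxG {R : Type*} [CommRing R] (q : R) (n : ℕ) :
    ∀ j m : ℕ, j + m ≤ n →
      (∑ k ∈ Finset.range (j + 1),
        qbinom q j k * (-1 : R) ^ (j - k) * q ^ (Nat.choose (j - k) 2) *
          ∏ i ∈ Finset.Ioc (k + m) n, (1 + q ^ i))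
      = (-1 : R) ^ j * q ^ (j ^ 2 + m * j) * ∏ i ∈ Finset.Ioc (j + m) n, (1 + q ^ i) := by
  intro j
  induction j with
  | zero => intro m _; simp [qbinom]
  | succ j ih =>
    intro m hm
    set B : ℕ → R := fun t =>
      q ^ t * qbinom q j t * (-1 : R) ^ (j + 1 - t) * q ^ (Nat.choose (j + 1 - t) 2) *
        ∏ i ∈ Finset.Ioc (t + m) n, (1 + q ^ i) with hBdef
    set A : ℕ → R := fun k =>
      qbinom q j k * (-1 : R) ^ (j - k) * q ^ (Nat.choose (j - k) 2) *
        ∏ i ∈ Finset.Ioc (k + (m + 1)) n, (1 + q ^ i) with hAdef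
    rw [Finset.sum_range_succ']
    have step1 : ∀ k ∈ Finset.range (j + 1),
        qbinom q (j + 1) (k + 1) * (-1 : R) ^ (j + 1 - (k + 1)) *
            q ^ (Nat.choose (j + 1 - (k + 1)) 2) *
            ∏ i ∈ Finset.Ioc (k + 1 + m) n, (1 + q ^ i)
        = A k + B (k + 1) := by
      intro k _
      rw [hAdef, hBdef, qbinom]
      simp only [Nat.succ_sub_succ]
      have h1 : k + 1 + m = k + (m + 1) := by omega
      rw [h1]
      ring
    rw [Finset.sum_congr rfl step1, Finset.sum_add_distrib]
    have hf0 : qbinom q (j + 1) 0 * (-1 : R) ^ (j + 1 - 0) * q ^ (Nat.choose (j + 1 - 0) 2) *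
        ∏ i ∈ Finset.Ioc (0 + m) n, (1 + q ^ i) = B 0 := by
      rw [hBdef]; simp [qbinom]
    rw [add_assoc, hf0, ← Finset.sum_range_succ' B (j + 1), Finset.sum_range_succ B (j + 1),
      show B (j + 1) = 0 by rw [hBdef]; simp [qbinom_eq_zero q j (j+1) (by omega)]]
    rw [add_zero]
    have hBsum : ∀ k ∈ Finset.range (j + 1),
        B k = -q ^ j * (qbinom q j k * (-1 : R) ^ (j - k) * q ^ (Nat.choose (j - k) 2) *
          ∏ i ∈ Finset.Ioc (k + m) n, (1 + q ^ i)) := by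
      intro k hk
      have hk' : k ≤ j := by simpa [Nat.lt_succ_iff] using hk
      obtain ⟨d, hd⟩ : ∃ d, j = k + d := ⟨j - k, by omega⟩
      subst hd
      rw [hBdef]
      simp only [Nat.add_sub_cancel_left, show k + d + 1 - k = d + 1 by omega,
        Nat.choose_succ_succ, Nat.choose_one_right]
      ring
    rw [Finset.sum_congr rfl hBsum, ← Finset.mul_sum, ih (m + 1) (by omega), ih m (by omega)]
    have hsplit : ∏ i ∈ Finset.Ioc (j + m) n, (1 + q ^ i)
        = (1 + q ^ (j + m + 1)) * ∏ i ∈ Finset.Ioc (j + m + 1) n, (1 + q ^ i) :=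
      prod_Ioc_bot _ (by omega)
    have h2 : j + (m + 1) = j + m + 1 := by omega
    have h3 : j + 1 + m = j + m + 1 := by omega
    rw [hsplit, h2, h3]
    ring

/-- For `0 ≤ j ≤ n`,
`Π_{i=j+1}^n (1+q^i) = Σ_k [j choose k]_q q^{k²} Π_{i=k+1}^n (1+q^i) (−1)^k`;
equivalently
`q^{j²}(−1)^j = Σ_k [j choose k]_q (−1)^{j−k} q^{C(j−k,2)} Π_{i=k+1}^j (1+q^i)`.
(The terms with `k > j` vanish, so the sums are taken over `0 ≤ k ≤ j`.) -/
theorem q_alternating_product_identity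
    {R : Type*} [CommRing R] (q : R) (n j : ℕ) (h : j ≤ n) :
    ((∏ i ∈ Finset.Icc (j + 1) n, (1 + q ^ i)) =
      ∑ k ∈ Finset.range (j + 1),
        qbinom q j k * q ^ (k ^ 2) * (∏ i ∈ Finset.Icc (k + 1) n, (1 + q ^ i)) * (-1 : R) ^ k)
    ∧ (q ^ (j ^ 2) * (-1 : R) ^ j =
      ∑ k ∈ Finset.range (j + 1),
        qbinom q j k * (-1 : R) ^ (j - k) * q ^ Nat.choose (j - k) 2 *
          ∏ i ∈ Finset.Icc (k + 1) j, (1 + q ^ i)) := by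
  constructor
  · simp only [Finset.Icc_add_one_left_eq_Ioc]
    have step : ∀ k ∈ Finset.range (j + 1),
        qbinom q j k * q ^ (k ^ 2) * (∏ i ∈ Finset.Ioc k n, (1 + q ^ i)) * (-1 : R) ^ k
        = (qbinom q j k * q ^ (k ^ 2 + 0 * k) * (∏ i ∈ Finset.Ioc (k + 0) (j + 0), (1 + q ^ i)) *
            (-1 : R) ^ k) * ∏ i ∈ Finset.Ioc j n, (1 + q ^ i) := by
      intro k hk
      have hk' : k ≤ j := by simpa [Nat.lt_succ_iff] using hk
      rw [← Finset.prod_Ioc_consecutive (fun i => 1 + q ^ i) hk' h]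
      simp only [Nat.add_zero, Nat.zero_mul, Nat.mul_zero]
      ring
    rw [Finset.sum_congr rfl step, ← Finset.sum_mul, auxT q j 0, one_mul]
  · simp only [Finset.Icc_add_one_left_eq_Ioc]
    have := auxG q j j 0 (by omega)
    simp only [Nat.add_zero, Nat.zero_mul, Nat.mul_zero, Finset.Ioc_self,
      Finset.prod_empty, mul_one] at this
    rw [this]
    ring
end
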